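/- Let α = (α₁,α₂) : ℝ² → ℝ² be smooth and compactly supported. Let 𝒜 be its Jacobian matrix, 𝒜ᵢⱼ = ∂αᵢ/∂xⱼ, and set H = (H₁,H₂) = (∂₂α₂, −∂₁α₂). Then ∫_{ℝ²} ∂₁H · Δα dx = −∫_{ℝ²} |∇H|² dx + Σ_{i,j=1}^{2} ∫_{ℝ²} (∂ᵢ∂ⱼαᵢ)(∂₂∂ⱼα₂) dx, where |∇H|² = Σ_{i,j=1}^{2} (∂ⱼHᵢ)², ∂₁H is the componentwise x₁-derivative of H, Δα = (Δα₁, Δα₂) is the componentwise Laplacian of α, and · denotes the dot product in ℝ². -/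

import Mathlib

open MeasureTheory

/-- Partial derivative in the first coordinate of `ℝ²`. -/
noncomputable def pd1 (f : ℝ × ℝ → ℝ) : ℝ × ℝ → ℝ := fun x => fderiv ℝ f x (1, 0)

/-- Partial derivative in the second coordinate of `ℝ²`. -/
noncomputable def pd2 (f : ℝ × ℝ → ℝ) : ℝ × ℝ → ℝ := fun x => fderiv ℝ f x (0, 1)

/-- The Laplacian `Δ = ∂₁₁ + ∂₂₂` on `ℝ²`. -/
noncomputable def lap (f : ℝ × ℝ → ℝ) : ℝ × ℝ → ℝ :=
  fun x => pd1 (pd1 f) x + pd2 (pd2 f) x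

lemma pdv_contDiff {f : ℝ × ℝ → ℝ} (hf : ContDiff ℝ (⊤ : ℕ∞) f) (v : ℝ × ℝ) :
    ContDiff ℝ (⊤ : ℕ∞) (fun x => fderiv ℝ f x v) :=
  (hf.fderiv_right (by simp)).clm_apply contDiff_const

lemma pd1_contDiff {f : ℝ × ℝ → ℝ} (hf : ContDiff ℝ (⊤ : ℕ∞) f) : ContDiff ℝ (⊤ : ℕ∞) (pd1 f) :=
  pdv_contDiff hf _

lemma pd2_contDiff {f : ℝ × ℝ → ℝ} (hf : ContDiff ℝ (⊤ : ℕ∞) f) : ContDiff ℝ (⊤ : ℕ∞) (pd2 f) :=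
  pdv_contDiff hf _

lemma pd1_hcs {f : ℝ × ℝ → ℝ} (hc : HasCompactSupport f) : HasCompactSupport (pd1 f) :=
  hc.fderiv_apply ℝ (1, 0)

lemma pd2_hcs {f : ℝ × ℝ → ℝ} (hc : HasCompactSupport f) : HasCompactSupport (pd2 f) :=
  hc.fderiv_apply ℝ (0, 1)

lemma fderiv_pd {f : ℝ × ℝ → ℝ} (hf : ContDiff ℝ (⊤ : ℕ∞) f) (v w x : ℝ × ℝ) :
    fderiv ℝ (fun y => fderiv ℝ f y v) x w = fderiv ℝ (fderiv ℝ f) x w v := by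
  rw [fderiv_clm_apply ((hf.fderiv_right (m := 1) (by exact WithTop.coe_le_coe.mpr le_top)).differentiable one_ne_zero x)
    (differentiableAt_const v)]
  simp

/-- Clairaut's theorem for smooth functions, as an equality of functions. -/
lemma pd_comm {f : ℝ × ℝ → ℝ} (hf : ContDiff ℝ (⊤ : ℕ∞) f) : pd1 (pd2 f) = pd2 (pd1 f) := by
  funext x
  show fderiv ℝ (fun y => fderiv ℝ f y (0,1)) x (1,0)
      = fderiv ℝ (fun y => fderiv ℝ f y (1,0)) x (0,1)
  rw [fderiv_pd hf, fderiv_pd hf]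
  exact (hf.contDiffAt.isSymmSndFDerivAt (by rw [minSmoothness_of_isRCLikeNormedField]; exact WithTop.coe_le_coe.mpr (le_top : (2 : ℕ∞) ≤ ⊤))).eq _ _

lemma pd1_neg (f : ℝ × ℝ → ℝ) : pd1 (fun x => -(f x)) = fun x => -(pd1 f x) := by
  funext x; simp [pd1, fderiv_neg]

lemma pd2_neg (f : ℝ × ℝ → ℝ) : pd2 (fun x => -(f x)) = fun x => -(pd2 f x) := by
  funext x; simp [pd2, fderiv_neg]

/-- Basic integration by parts in a direction `v`. -/
lemma ibp (v : ℝ × ℝ) {u w : ℝ × ℝ → ℝ} (hu : ContDiff ℝ (⊤ : ℕ∞) u) (hw : ContDiff ℝ (⊤ : ℕ∞) w)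
    (hcu : HasCompactSupport u) :
    ∫ x : ℝ × ℝ, u x * fderiv ℝ w x v = -∫ x : ℝ × ℝ, fderiv ℝ u x v * w x := by
  apply integral_mul_fderiv_eq_neg_fderiv_mul_of_integrable
  · exact (((pdv_contDiff hu v).continuous).mul hw.continuous).integrable_of_hasCompactSupport
      (((hcu.fderiv_apply ℝ v)).mul_right)
  · exact ((hu.continuous).mul ((pdv_contDiff hw v).continuous)).integrable_of_hasCompactSupport
      (hcu.mul_right)
  · exact ((hu.continuous).mul hw.continuous).integrable_of_hasCompactSupport (hcu.mul_right)
  · exact fun x _ => hu.differentiable (by simp) x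
  · exact fun x _ => hw.differentiable (by simp) x

lemma ibp1 {u w : ℝ × ℝ → ℝ} (hu : ContDiff ℝ (⊤ : ℕ∞) u) (hw : ContDiff ℝ (⊤ : ℕ∞) w)
    (hcu : HasCompactSupport u) :
    ∫ x : ℝ × ℝ, u x * pd1 w x = -∫ x : ℝ × ℝ, pd1 u x * w x :=
  ibp (1, 0) hu hw hcu

lemma ibp2 {u w : ℝ × ℝ → ℝ} (hu : ContDiff ℝ (⊤ : ℕ∞) u) (hw : ContDiff ℝ (⊤ : ℕ∞) w)
    (hcu : HasCompactSupport u) :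
    ∫ x : ℝ × ℝ, u x * pd2 w x = -∫ x : ℝ × ℝ, pd2 u x * w x :=
  ibp (0, 1) hu hw hcu

/-- The integration-by-parts identity (17) of Section 2.1:
`∫ ∂₁H · Δα = −∫ |∇H|² + Σᵢⱼ ∫ (∂ᵢ∂ⱼαᵢ)(∂₂∂ⱼα₂)`,
where `H = (∂₂α₂, −∂₁α₂)`. -/
theorem ibp_identity_17
    (α1 α2 : ℝ × ℝ → ℝ)
    (h1 : ContDiff ℝ (⊤ : ℕ∞) α1) (h2 : ContDiff ℝ (⊤ : ℕ∞) α2)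
    (hc1 : HasCompactSupport α1) (hc2 : HasCompactSupport α2)
    (H1 H2 : ℝ × ℝ → ℝ)
    (hH1 : H1 = pd2 α2) (hH2 : H2 = fun x => -(pd1 α2 x)) :
    (∫ x : ℝ × ℝ, (pd1 H1 x * lap α1 x + pd1 H2 x * lap α2 x))
      = -(∫ x : ℝ × ℝ,
            (pd1 H1 x ^ 2 + pd2 H1 x ^ 2 + pd1 H2 x ^ 2 + pd2 H2 x ^ 2))
        + ((∫ x : ℝ × ℝ, pd1 (pd1 α1) x * pd2 (pd1 α2) x)
          + (∫ x : ℝ × ℝ, pd1 (pd2 α1) x * pd2 (pd2 α2) x)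
          + (∫ x : ℝ × ℝ, pd2 (pd1 α2) x * pd2 (pd1 α2) x)
          + (∫ x : ℝ × ℝ, pd2 (pd2 α2) x * pd2 (pd2 α2) x)) := by
  subst hH1 hH2
  have ha : ContDiff ℝ (⊤ : ℕ∞) (pd1 (pd1 α1)) := pd1_contDiff (pd1_contDiff h1)
  have hb : ContDiff ℝ (⊤ : ℕ∞) (pd2 (pd1 α1)) := pd2_contDiff (pd1_contDiff h1)
  have hcc : ContDiff ℝ (⊤ : ℕ∞) (pd2 (pd2 α1)) := pd2_contDiff (pd2_contDiff h1)
  have hp : ContDiff ℝ (⊤ : ℕ∞) (pd1 (pd1 α2)) := pd1_contDiff (pd1_contDiff h2)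
  have hq : ContDiff ℝ (⊤ : ℕ∞) (pd2 (pd1 α2)) := pd2_contDiff (pd1_contDiff h2)
  have hr : ContDiff ℝ (⊤ : ℕ∞) (pd2 (pd2 α2)) := pd2_contDiff (pd2_contDiff h2)
  have hcp : HasCompactSupport (pd1 (pd1 α2)) := pd1_hcs (pd1_hcs hc2)
  have hcq : HasCompactSupport (pd2 (pd1 α2)) := pd2_hcs (pd1_hcs hc2)
  have hcr : HasCompactSupport (pd2 (pd2 α2)) := pd2_hcs (pd2_hcs hc2)
  have mkint : ∀ (f g : ℝ × ℝ → ℝ), ContDiff ℝ (⊤ : ℕ∞) f → ContDiff ℝ (⊤ : ℕ∞) g → HasCompactSupport f →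
      Integrable (fun x => f x * g x) (volume : Measure (ℝ × ℝ)) := fun f g hf hg hcf =>
    ((hf.continuous.mul hg.continuous)).integrable_of_hasCompactSupport (hcf.mul_right)
  have e2 : pd1 (pd2 α2) = pd2 (pd1 α2) := pd_comm h2
  have e1 : pd1 (pd2 α1) = pd2 (pd1 α1) := pd_comm h1
  have e3 : pd2 (pd1 (pd1 α2)) = pd1 (pd2 (pd1 α2)) := (pd_comm (pd1_contDiff h2)).symm
  have e4 : pd2 (pd2 (pd1 α2)) = pd1 (pd2 (pd2 α2)) := by
    rw [← e2, pd_comm (pd2_contDiff h2)]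
  have fact2 : ∫ x : ℝ × ℝ, pd1 (pd1 α2) x * pd2 (pd2 α2) x
      = ∫ x : ℝ × ℝ, pd2 (pd1 α2) x * pd2 (pd1 α2) x := by
    have s1 : ∫ x : ℝ × ℝ, pd1 (pd1 α2) x * pd2 (pd2 α2) x
        = -∫ x : ℝ × ℝ, pd2 (pd1 (pd1 α2)) x * pd2 α2 x :=
      ibp2 hp (pd2_contDiff h2) hcp
    have s2 : ∫ x : ℝ × ℝ, pd2 (pd1 α2) x * pd1 (pd2 α2) x
        = -∫ x : ℝ × ℝ, pd1 (pd2 (pd1 α2)) x * pd2 α2 x :=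
      ibp1 hq (pd2_contDiff h2) hcq
    rw [s1, e3, ← s2, e2]
  have fact1 : ∫ x : ℝ × ℝ, pd2 (pd1 α2) x * pd2 (pd2 α1) x
      = ∫ x : ℝ × ℝ, pd2 (pd1 α1) x * pd2 (pd2 α2) x := by
    have s3 : ∫ x : ℝ × ℝ, pd2 (pd1 α2) x * pd2 (pd2 α1) x
        = -∫ x : ℝ × ℝ, pd2 (pd2 (pd1 α2)) x * pd2 α1 x :=
      ibp2 hq (pd2_contDiff h1) hcq
    have s4 : ∫ x : ℝ × ℝ, pd2 (pd2 α2) x * pd1 (pd2 α1) x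
        = -∫ x : ℝ × ℝ, pd1 (pd2 (pd2 α2)) x * pd2 α1 x :=
      ibp1 hr (pd2_contDiff h1) hcr
    rw [s3, e4, ← s4, e1,
      show (fun x : ℝ × ℝ => pd2 (pd2 α2) x * pd2 (pd1 α1) x)
        = fun x : ℝ × ℝ => pd2 (pd1 α1) x * pd2 (pd2 α2) x from funext fun x => mul_comm _ _]
  have comm_qa : ∫ x : ℝ × ℝ, pd2 (pd1 α2) x * pd1 (pd1 α1) x
      = ∫ x : ℝ × ℝ, pd1 (pd1 α1) x * pd2 (pd1 α2) x := by
    rw [show (fun x : ℝ × ℝ => pd2 (pd1 α2) x * pd1 (pd1 α1) x)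
        = fun x : ℝ × ℝ => pd1 (pd1 α1) x * pd2 (pd1 α2) x from funext fun x => mul_comm _ _]
  simp only [lap, pd1_neg, pd2_neg, e2, e1]
  set a := pd1 (pd1 α1) with hadef
  set b := pd2 (pd1 α1) with hbdef
  set c := pd2 (pd2 α1) with hcdef
  set p := pd1 (pd1 α2) with hpdef
  set q := pd2 (pd1 α2) with hqdef
  set r := pd2 (pd2 α2) with hrdef
  rw [show (fun x : ℝ × ℝ => q x * (a x + c x) + -(p x) * (p x + r x))
      = fun x : ℝ × ℝ => (q x * a x + q x * c x) - (p x * p x + p x * r x) from by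
      funext x; ring]
  rw [show (fun x : ℝ × ℝ => q x ^ 2 + r x ^ 2 + (-(p x)) ^ 2 + (-(q x)) ^ 2)
      = fun x : ℝ × ℝ => (q x * q x + r x * r x) + (p x * p x + q x * q x) from by
      funext x; ring]
  have iL1 : Integrable (fun x : ℝ × ℝ => q x * a x + q x * c x) volume :=
    (mkint q a hq ha hcq).add (mkint q c hq hcc hcq)
  have iL2 : Integrable (fun x : ℝ × ℝ => p x * p x + p x * r x) volume :=
    (mkint p p hp hp hcp).add (mkint p r hp hr hcp)
  have iR1 : Integrable (fun x : ℝ × ℝ => q x * q x + r x * r x) volume :=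
    (mkint q q hq hq hcq).add (mkint r r hr hr hcr)
  have iR2 : Integrable (fun x : ℝ × ℝ => p x * p x + q x * q x) volume :=
    (mkint p p hp hp hcp).add (mkint q q hq hq hcq)
  rw [integral_sub iL1 iL2,
    integral_add (mkint q a hq ha hcq) (mkint q c hq hcc hcq),
    integral_add (mkint p p hp hp hcp) (mkint p r hp hr hcp),
    integral_add iR1 iR2,
    integral_add (mkint q q hq hq hcq) (mkint r r hr hr hcr),
    integral_add (mkint p p hp hp hcp) (mkint q q hq hq hcq),
    fact1, fact2, comm_qa]
  ring
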